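/- arXiv:1710.09609 — 5 statements merged into one kernel-verified Lean document; each statement's English description precedes it below -/
import Mathlib

section
/- Pointwise Rellich–Morawetz identity for the curl (equation (6.1) of the paper): Let A : ℝ³ → M₃(ℝ) be a continuously differentiable matrix-valued field such that A(y) is a symmetric matrix for every y ∈ ℝ³, and let ξ : ℝ³ → ℂ³ be continuously differentiable. Then for every y ∈ ℝ³, 2 Re( curl(Aξ)(y) · ( \overline{ξ(y)} × y ) ) = 2 Re( div( z ↦ (A(z)ξ(z)·z) \overline{ξ(z)} )(y) − (A(y)ξ(y)·y) (div \overline{ξ})(y) ) − div( z ↦ (A(z)ξ(z)·\overline{ξ(z)}) z )(y) + A(y)ξ(y)·\overline{ξ(y)} − ((y·∇)A)(y) ξ(y) · \overline{ξ(y)}, where Aξ denotes the vector field z ↦ A(z)ξ(z) (matrix–vector product with real entries of A viewed in ℂ), and ((y·∇)A)(y) is the real 3×3 matrix with entries Σₙ yₙ ∂ₙA_{jl}(y). -/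
noncomputable section

open Finset

/-- Partial derivative in the `i`-th coordinate direction of a function `(Fin 3 → ℝ) → ℂ`. -/
def pdC (i : Fin 3) (g : (Fin 3 → ℝ) → ℂ) (y : Fin 3 → ℝ) : ℂ :=
  fderiv ℝ g y (Pi.single i 1)

/-- Partial derivative in the `i`-th coordinate direction of a function `(Fin 3 → ℝ) → ℝ`. -/
def pdR (i : Fin 3) (g : (Fin 3 → ℝ) → ℝ) (y : Fin 3 → ℝ) : ℝ :=
  fderiv ℝ g y (Pi.single i 1)

/-- Unconjugated bilinear dot product on `ℂ³`. -/
def cdot (a b : Fin 3 → ℂ) : ℂ := ∑ i, a i * b i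

/-- Componentwise complex conjugation on `ℂ³`. -/
def cconj (a : Fin 3 → ℂ) : Fin 3 → ℂ := fun i => starRingEnd ℂ (a i)

/-- Cross product on `ℂ³`. -/
def ccross (a b : Fin 3 → ℂ) : Fin 3 → ℂ :=
  ![a 1 * b 2 - a 2 * b 1, a 2 * b 0 - a 0 * b 2, a 0 * b 1 - a 1 * b 0]

/-- A real vector regarded as an element of `ℂ³`. -/
def toC (x : Fin 3 → ℝ) : Fin 3 → ℂ := fun i => (x i : ℂ)

/-- Divergence of a vector field `(Fin 3 → ℝ) → ℂ³`. -/
def cdiv (v : (Fin 3 → ℝ) → (Fin 3 → ℂ)) (y : Fin 3 → ℝ) : ℂ :=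
  ∑ i, pdC i (fun z => v z i) y

/-- Curl of a vector field `(Fin 3 → ℝ) → ℂ³`. -/
def ccurl (v : (Fin 3 → ℝ) → (Fin 3 → ℂ)) (y : Fin 3 → ℝ) : Fin 3 → ℂ :=
  ![pdC 1 (fun z => v z 2) y - pdC 2 (fun z => v z 1) y,
    pdC 2 (fun z => v z 0) y - pdC 0 (fun z => v z 2) y,
    pdC 0 (fun z => v z 1) y - pdC 1 (fun z => v z 0) y]

/-- The vector field `z ↦ A(z) ξ(z)` (matrix–vector product, real entries of `A` viewed in `ℂ`). -/
def matVecField (A : (Fin 3 → ℝ) → Matrix (Fin 3) (Fin 3) ℝ)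
    (ξ : (Fin 3 → ℝ) → (Fin 3 → ℂ)) : (Fin 3 → ℝ) → (Fin 3 → ℂ) :=
  fun z j => ∑ l, (A z j l : ℂ) * ξ z l

/-- A real `3×3` matrix applied to a complex vector. -/
def mvC (M : Matrix (Fin 3) (Fin 3) ℝ) (v : Fin 3 → ℂ) : Fin 3 → ℂ :=
  fun j => ∑ l, (M j l : ℂ) * v l

/-- The radial derivative matrix `((y·∇)A)(y)` with entries `Σₙ yₙ ∂ₙA_{jl}(y)`. -/
def radDerivMat (A : (Fin 3 → ℝ) → Matrix (Fin 3) (Fin 3) ℝ) (y : Fin 3 → ℝ) :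
    Matrix (Fin 3) (Fin 3) ℝ :=
  Matrix.of fun j l => ∑ n, y n * pdR n (fun z => A z j l) y

/-!
Write `v = Aξ`. The vector identity `curl v · (a × b) = ((a·∇)v)·b − ((b·∇)v)·a` turns the left
side into `2 Re(((ξ̄·∇)v)·y − ((y·∇)v)·ξ̄)`. Expanding the divergences on the right by the product
rule and `∂ₙv = (∂ₙA)ξ + A∂ₙξ`, the difference of the two sides reduces to terms that cancel
because `A` and `∂ₙA` are real symmetric: `Aξ·ξ̄` and `(∂ₙA)ξ·ξ̄` are real, and `Aξ·∂ₙξ̄` is the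
conjugate of `A∂ₙξ·ξ̄`.
-/

section PartialDerivatives

variable {y : Fin 3 → ℝ}

lemma pdC_mul {f g : (Fin 3 → ℝ) → ℂ} (i : Fin 3) (hf : DifferentiableAt ℝ f y)
    (hg : DifferentiableAt ℝ g y) :
    pdC i (fun z => f z * g z) y = pdC i f y * g y + f y * pdC i g y := by
  simp only [pdC, fderiv_fun_mul hf hg, add_apply, smul_apply, smul_eq_mul]
  ring

lemma pdC_sum {ι : Type*} (s : Finset ι) {f : ι → (Fin 3 → ℝ) → ℂ} (i : Fin 3)
    (hf : ∀ j ∈ s, DifferentiableAt ℝ (f j) y) :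
    pdC i (fun z => ∑ j ∈ s, f j z) y = ∑ j ∈ s, pdC i (f j) y := by
  simp only [pdC, fderiv_fun_sum hf, _root_.sum_apply]

lemma pdC_conj {f : (Fin 3 → ℝ) → ℂ} (i : Fin 3) :
    pdC i (fun z => starRingEnd ℂ (f z)) y = starRingEnd ℂ (pdC i f y) := by
  simp only [pdC]
  rw [show (fun z => starRingEnd ℂ (f z)) = fun z => star (f z) from rfl, fderiv_star]
  rfl

lemma pdC_ofReal {f : (Fin 3 → ℝ) → ℝ} (i : Fin 3) :
    pdC i (fun z => (f z : ℂ)) y = pdR i f y := by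
  simp only [pdC, pdR]
  by_cases hf : DifferentiableAt ℝ f y
  · rw [show (fun z => (f z : ℂ)) = Complex.ofRealCLM ∘ f from rfl,
      fderiv_comp y Complex.ofRealCLM.differentiableAt hf, ContinuousLinearMap.fderiv]
    rfl
  · have hfC : ¬ DifferentiableAt ℝ (fun z => (f z : ℂ)) y := fun h =>
      hf (by simpa [Function.comp_def] using Complex.reCLM.differentiableAt.comp y h)
    simp [fderiv_zero_of_not_differentiableAt hf, fderiv_zero_of_not_differentiableAt hfC]

lemma pdC_coord (i j : Fin 3) :
    pdC i (fun z => (z j : ℂ)) y = if i = j then 1 else 0 := by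
  rw [pdC_ofReal, pdR, show (fun z : Fin 3 → ℝ => z j)
    = (ContinuousLinearMap.proj j : (Fin 3 → ℝ) →L[ℝ] ℝ) from rfl, ContinuousLinearMap.fderiv]
  split_ifs with h <;> simp [h, Ne.symm]

def pdV (i : Fin 3) (v : (Fin 3 → ℝ) → Fin 3 → ℂ) (y : Fin 3 → ℝ) : Fin 3 → ℂ :=
  fun j => pdC i (fun z => v z j) y

def pdMat (i : Fin 3) (A : (Fin 3 → ℝ) → Matrix (Fin 3) (Fin 3) ℝ) (y : Fin 3 → ℝ) :
    Matrix (Fin 3) (Fin 3) ℝ :=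
  Matrix.of fun j l => pdR i (fun z => A z j l) y

lemma differentiableAt_cdot {u w : (Fin 3 → ℝ) → Fin 3 → ℂ}
    (hu : ∀ j, DifferentiableAt ℝ (fun z => u z j) y)
    (hw : ∀ j, DifferentiableAt ℝ (fun z => w z j) y) :
    DifferentiableAt ℝ (fun z => cdot (u z) (w z)) y :=
  DifferentiableAt.fun_sum fun j _ => (hu j).mul (hw j)

lemma differentiableAt_toC (j : Fin 3) : DifferentiableAt ℝ (fun z => toC z j) y :=
  (Complex.differentiable_ofReal _).comp y (differentiableAt_apply j y)

lemma differentiableAt_matVecField {A : (Fin 3 → ℝ) → Matrix (Fin 3) (Fin 3) ℝ}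
    {ξ : (Fin 3 → ℝ) → Fin 3 → ℂ} (hA : ∀ j l, DifferentiableAt ℝ (fun z => A z j l) y)
    (hξ : ∀ l, DifferentiableAt ℝ (fun z => ξ z l) y) (j : Fin 3) :
    DifferentiableAt ℝ (fun z => matVecField A ξ z j) y :=
  DifferentiableAt.fun_sum fun l _ =>
    ((Complex.differentiable_ofReal _).comp y (hA j l)).mul (hξ l)

lemma pdC_cdot {u w : (Fin 3 → ℝ) → Fin 3 → ℂ}
    (hu : ∀ j, DifferentiableAt ℝ (fun z => u z j) y)
    (hw : ∀ j, DifferentiableAt ℝ (fun z => w z j) y) (i : Fin 3) :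
    pdC i (fun z => cdot (u z) (w z)) y = cdot (pdV i u y) (w y) + cdot (u y) (pdV i w y) := by
  simp only [cdot]
  rw [pdC_sum _ i fun j _ => (hu j).fun_mul (hw j), ← Finset.sum_add_distrib]
  exact Finset.sum_congr rfl fun j _ => pdC_mul i (hu j) (hw j)

lemma pdV_cconj (ξ : (Fin 3 → ℝ) → Fin 3 → ℂ) (i : Fin 3) :
    pdV i (fun z => cconj (ξ z)) y = cconj (pdV i ξ y) :=
  funext fun _ => pdC_conj i

lemma cdot_pdV_toC (a : Fin 3 → ℂ) (i : Fin 3) : cdot a (pdV i toC y) = a i := by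
  simp [cdot, pdV, toC, pdC_coord]

lemma pdV_matVecField {A : (Fin 3 → ℝ) → Matrix (Fin 3) (Fin 3) ℝ}
    {ξ : (Fin 3 → ℝ) → Fin 3 → ℂ} (hA : ∀ j l, DifferentiableAt ℝ (fun z => A z j l) y)
    (hξ : ∀ l, DifferentiableAt ℝ (fun z => ξ z l) y) (i : Fin 3) :
    pdV i (matVecField A ξ) y = mvC (pdMat i A y) (ξ y) + mvC (A y) (pdV i ξ y) := by
  have hAC : ∀ j l, DifferentiableAt ℝ (fun z => (A z j l : ℂ)) y :=
    fun j l => (Complex.differentiable_ofReal _).comp y (hA j l)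
  funext j
  simp only [pdV, matVecField, Pi.add_apply, mvC, pdMat, Matrix.of_apply]
  rw [pdC_sum _ i fun l _ => (hAC j l).fun_mul (hξ l), ← Finset.sum_add_distrib]
  refine Finset.sum_congr rfl fun l _ => ?_
  rw [pdC_mul i (hAC j l) (hξ l), pdC_ofReal]

lemma cdiv_mul {f : (Fin 3 → ℝ) → ℂ} {g : (Fin 3 → ℝ) → Fin 3 → ℂ} (hf : DifferentiableAt ℝ f y)
    (hg : ∀ i, DifferentiableAt ℝ (fun z => g z i) y) :
    cdiv (fun z i => f z * g z i) y = ∑ i, pdC i f y * g y i + f y * cdiv g y := by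
  simp only [cdiv, pdC_mul _ hf (hg _), Finset.sum_add_distrib, Finset.mul_sum]

lemma cdiv_coord : cdiv (fun z i => (z i : ℂ)) y = 3 := by
  simp [cdiv, pdC_coord]

lemma ccurl_cdot_ccross (v : (Fin 3 → ℝ) → Fin 3 → ℂ) (a b : Fin 3 → ℂ) :
    cdot (ccurl v y) (ccross a b)
      = ∑ i, a i * cdot (pdV i v y) b - ∑ i, b i * cdot (pdV i v y) a := by
  simp only [cdot, ccurl, ccross, pdV, Fin.sum_univ_three, Matrix.cons_val_zero,
    Matrix.cons_val_one, Matrix.cons_val_two, Matrix.head_cons, Matrix.tail_cons]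
  ring

end PartialDerivatives

lemma cdot_add_left (a b c : Fin 3 → ℂ) : cdot (a + b) c = cdot a c + cdot b c := by
  simp only [cdot, Pi.add_apply, add_mul, Finset.sum_add_distrib]

lemma cconj_apply (a : Fin 3 → ℂ) (i : Fin 3) : cconj a i = starRingEnd ℂ (a i) := rfl

lemma matVecField_apply (A : (Fin 3 → ℝ) → Matrix (Fin 3) (Fin 3) ℝ)
    (ξ : (Fin 3 → ℝ) → Fin 3 → ℂ) (z : Fin 3 → ℝ) : matVecField A ξ z = mvC (A z) (ξ z) := rfl

lemma conj_cdot_mvC_cconj {M : Matrix (Fin 3) (Fin 3) ℝ} (hM : M.IsSymm) (a b : Fin 3 → ℂ) :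
    starRingEnd ℂ (cdot (mvC M a) (cconj b)) = cdot (mvC M b) (cconj a) := by
  have h : ∀ j l, M l j = M j l := fun j l => by rw [← hM.apply j l]
  simp only [cdot, mvC, cconj, map_sum, map_mul, Complex.conj_ofReal, Complex.conj_conj]
  simp only [Fin.sum_univ_three, h 1 0, h 2 0, h 2 1]
  ring

lemma pdMat_isSymm {A : (Fin 3 → ℝ) → Matrix (Fin 3) (Fin 3) ℝ} (hA : ∀ z, (A z).IsSymm)
    (i : Fin 3) (y : Fin 3 → ℝ) : (pdMat i A y).IsSymm :=
  Matrix.IsSymm.ext fun j l => by simp only [pdMat, Matrix.of_apply, (hA _).apply]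

lemma cdot_mvC_radDerivMat (A : (Fin 3 → ℝ) → Matrix (Fin 3) (Fin 3) ℝ) (y : Fin 3 → ℝ)
    (a b : Fin 3 → ℂ) :
    cdot (mvC (radDerivMat A y) a) b = ∑ n, (y n : ℂ) * cdot (mvC (pdMat n A y) a) b := by
  simp only [cdot, mvC, radDerivMat, pdMat, Matrix.of_apply, Fin.sum_univ_three]
  push_cast
  ring

/-- **Pointwise Rellich–Morawetz identity for the curl** (equation (6.1)).
For a `C¹` symmetric real-matrix-valued field `A` and a `C¹` field `ξ : ℝ³ → ℂ³`, at every
`y ∈ ℝ³`: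
`2 Re( curl(Aξ)(y) · ( conj ξ(y) × y ) )
  = 2 Re( div( z ↦ (A(z)ξ(z)·z) conj ξ(z) )(y) − (A(y)ξ(y)·y) (div conj ξ)(y) )
    − div( z ↦ (A(z)ξ(z)·conj ξ(z)) z )(y) + A(y)ξ(y)·conj ξ(y)
    − ((y·∇)A)(y) ξ(y) · conj ξ(y)`. -/
theorem rellich_morawetz_curl_identity
    (A : (Fin 3 → ℝ) → Matrix (Fin 3) (Fin 3) ℝ)
    (hA : ∀ j l, ContDiff ℝ 1 (fun y => A y j l))
    (hAsymm : ∀ y, (A y).IsSymm)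
    (ξ : (Fin 3 → ℝ) → (Fin 3 → ℂ))
    (hξ : ∀ i, ContDiff ℝ 1 (fun y => ξ y i))
    (y : Fin 3 → ℝ) :
    ((2 * (cdot (ccurl (matVecField A ξ) y) (ccross (cconj (ξ y)) (toC y))).re : ℝ) : ℂ)
      = ((2 * ((cdiv (fun z i => cdot (matVecField A ξ z) (toC z) * starRingEnd ℂ (ξ z i)) y
              - cdot (matVecField A ξ y) (toC y) * cdiv (fun z => cconj (ξ z)) y).re) : ℝ) : ℂ)
        - cdiv (fun z i => cdot (matVecField A ξ z) (cconj (ξ z)) * (z i : ℂ)) y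
        + cdot (matVecField A ξ y) (cconj (ξ y))
        - cdot (mvC (radDerivMat A y) (ξ y)) (cconj (ξ y)) := by
  have hAy : ∀ j l, DifferentiableAt ℝ (fun z => A z j l) y :=
    fun j l => (hA j l).differentiable one_ne_zero y
  have hξy : ∀ l, DifferentiableAt ℝ (fun z => ξ z l) y :=
    fun l => (hξ l).differentiable one_ne_zero y
  have hv := differentiableAt_matVecField hAy hξy
  have hξc : ∀ l, DifferentiableAt ℝ (fun z => cconj (ξ z) l) y := fun l => (hξy l).star
  rw [show (fun z => cconj (ξ z)) = fun z i => starRingEnd ℂ (ξ z i) from rfl,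
    ccurl_cdot_ccross, cdiv_mul (g := fun z i => starRingEnd ℂ (ξ z i))
      (differentiableAt_cdot hv differentiableAt_toC) hξc,
    cdiv_mul (g := fun z i => (z i : ℂ)) (differentiableAt_cdot hv hξc) differentiableAt_toC,
    cdiv_coord, cdot_mvC_radDerivMat, ← Complex.add_conj, ← Complex.add_conj]
  simp only [pdC_cdot hv differentiableAt_toC, pdC_cdot hv hξc, pdV_cconj, cdot_pdV_toC,
    pdV_matVecField hAy hξy]
  simp only [matVecField_apply, cdot_add_left, map_sum, map_sub, map_add, map_mul,
    Complex.conj_ofReal, Complex.conj_conj, cconj_apply, toC,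
    conj_cdot_mvC_cconj (pdMat_isSymm hAsymm _ y), conj_cdot_mvC_cconj (hAsymm y) (pdV _ ξ y)]
  -- What is left is `2 Aξ·ξ̄ = Σᵢ (Aξ)ᵢ ξ̄ᵢ + conj (Σᵢ (Aξ)ᵢ ξ̄ᵢ)`, as `Aξ·ξ̄` is real.
  have hT : cdot (mvC (A y) (ξ y)) (cconj (ξ y)) = ∑ i, mvC (A y) (ξ y) i * starRingEnd ℂ (ξ y i) :=
    rfl
  have hT_conj := congrArg (starRingEnd ℂ) hT
  simp only [conj_cdot_mvC_cconj (hAsymm y), map_sum, map_mul, Complex.conj_conj] at hT_conj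
  simp only [Fin.sum_univ_three] at hT hT_conj ⊢
  linear_combination hT + hT_conj
end
end

section
/- Abstract inf-sup lemma behind Lemma 4.9 (inf-sup stability from a Gårding-type inequality, a sign-flip map, and adjoint solvability): Let H be a complex Hilbert space and B : H × H → ℂ a sesquilinear form (linear in the first argument, additive and conjugate-homogeneous in the second). Let γ > 0, c ≥ 0, S ≥ 0, M ≥ 0, let F : H → H satisfy ‖F(v)‖ ≤ ‖v‖ for all v ∈ H, and let P : H → H be a linear map with ‖P(v)‖ ≤ M‖v‖ for all v ∈ H. Assume: (i) (Gårding-type inequality) |B(v, F(v)) + c‖P(v)‖²| ≥ γ‖v‖² for all v ∈ H; (ii) (adjoint solvability) for every v ∈ H there exists w ∈ H with B(v, w) = c‖P(v)‖² and ‖w‖ ≤ S‖P(v)‖. Then for every v ∈ H there exists w' ∈ H with ‖w'‖ ≤ (1 + S·M)‖v‖ and |B(v, w')| ≥ γ‖v‖². In particular, for every v ≠ 0 there exists w' ≠ 0 with |B(v, w')| ≥ (γ/(1 + S·M)) ‖v‖ ‖w'‖. -/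
/-!
Test `v` against `F v + w`, where `w` solves the adjoint problem for `v`: then
`B(v, F v + w) = B(v, F v) + c‖P v‖²`, which the Gårding inequality bounds below by `γ‖v‖²`,
while `‖F v + w‖ ≤ ‖v‖ + S‖P v‖ ≤ (1 + S M)‖v‖`. Dividing by `‖v‖ ‖F v + w‖` gives the
inf-sup constant `γ / (1 + S M)`.
-/

theorem ne_zero_and_div_mul_le_of_sq_le_norm {E G : Type*} [NormedAddCommGroup E]
    [SeminormedAddCommGroup G] {f : E → G} (hf : f 0 = 0) {γ K : ℝ} (hγ : 0 < γ) {v w : E}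
    (hv : v ≠ 0) (hw : ‖w‖ ≤ K * ‖v‖) (hfw : γ * ‖v‖ ^ 2 ≤ ‖f w‖) :
    w ≠ 0 ∧ γ / K * (‖v‖ * ‖w‖) ≤ ‖f w‖ := by
  have hv' : 0 < ‖v‖ := norm_pos_iff.mpr hv
  have hw0 : w ≠ 0 := by
    rintro rfl
    rw [hf, norm_zero] at hfw
    nlinarith [mul_pos hγ (pow_pos hv' 2)]
  have hK : 0 < K := pos_of_mul_pos_left ((norm_pos_iff.mpr hw0).trans_le hw) hv'.le
  refine ⟨hw0, ?_⟩
  calc γ / K * (‖v‖ * ‖w‖) ≤ γ / K * (‖v‖ * (K * ‖v‖)) := by gcongr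
    _ = γ * ‖v‖ ^ 2 := by field_simp
    _ ≤ ‖f w‖ := hfw

theorem abstract_inf_sup_from_garding_general
    {H : Type*} [NormedAddCommGroup H] [InnerProductSpace ℂ H]
    (B : H → H → ℂ)
    (hB_add₂ : ∀ u v w : H, B u (v + w) = B u v + B u w)
    (γ c S M : ℝ) (hγ : 0 < γ) (hS : 0 ≤ S)
    (F : H → H) (hF : ∀ v : H, ‖F v‖ ≤ ‖v‖)
    (P : H →ₗ[ℂ] H) (hP : ∀ v : H, ‖P v‖ ≤ M * ‖v‖)
    (hGarding : ∀ v : H, γ * ‖v‖ ^ 2 ≤ ‖B v (F v) + ((c * ‖P v‖ ^ 2 : ℝ) : ℂ)‖)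
    (hAdjoint : ∀ v : H, ∃ w : H,
      B v w = ((c * ‖P v‖ ^ 2 : ℝ) : ℂ) ∧ ‖w‖ ≤ S * ‖P v‖) :
    (∀ v : H, ∃ w' : H, ‖w'‖ ≤ (1 + S * M) * ‖v‖ ∧ γ * ‖v‖ ^ 2 ≤ ‖B v w'‖) ∧
      (∀ v : H, v ≠ 0 → ∃ w' : H, w' ≠ 0 ∧
        γ / (1 + S * M) * (‖v‖ * ‖w'‖) ≤ ‖B v w'‖) := by
  have test : ∀ v : H, ∃ w' : H, ‖w'‖ ≤ (1 + S * M) * ‖v‖ ∧ γ * ‖v‖ ^ 2 ≤ ‖B v w'‖ := by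
    intro v
    obtain ⟨w, hBw, hw⟩ := hAdjoint v
    refine ⟨F v + w, ?_, by rw [hB_add₂, hBw]; exact hGarding v⟩
    calc ‖F v + w‖ ≤ ‖v‖ + S * (M * ‖v‖) :=
          (norm_add_le _ _).trans (add_le_add (hF v) (hw.trans (by gcongr; exact hP v)))
      _ = (1 + S * M) * ‖v‖ := by ring
  refine ⟨test, fun v hv => ?_⟩
  obtain ⟨w', hw', hBw'⟩ := test v
  exact ⟨w', ne_zero_and_div_mul_le_of_sq_le_norm
    (AddMonoidHom.mk' (B v) (hB_add₂ v)).map_zero hγ hv hw' hBw'⟩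

/-- **Abstract inf-sup lemma** behind Lemma 4.9: inf-sup stability from a Gårding-type
inequality, a sign-flip map `F`, and solvability of an adjoint problem. -/
theorem abstract_inf_sup_from_garding
    {H : Type*} [NormedAddCommGroup H] [InnerProductSpace ℂ H] [CompleteSpace H]
    (B : H → H → ℂ)
    (hB_add₁ : ∀ u v w : H, B (u + v) w = B u w + B v w)
    (hB_smul₁ : ∀ (c : ℂ) (u w : H), B (c • u) w = c * B u w)
    (hB_add₂ : ∀ u v w : H, B u (v + w) = B u v + B u w)
    (hB_smul₂ : ∀ (c : ℂ) (u w : H), B u (c • w) = (starRingEnd ℂ c) * B u w)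
    (γ c S M : ℝ) (hγ : 0 < γ) (hc : 0 ≤ c) (hS : 0 ≤ S) (hM : 0 ≤ M)
    (F : H → H) (hF : ∀ v : H, ‖F v‖ ≤ ‖v‖)
    (P : H →ₗ[ℂ] H) (hP : ∀ v : H, ‖P v‖ ≤ M * ‖v‖)
    (hGarding : ∀ v : H, γ * ‖v‖ ^ 2 ≤ ‖B v (F v) + ((c * ‖P v‖ ^ 2 : ℝ) : ℂ)‖)
    (hAdjoint : ∀ v : H, ∃ w : H,
      B v w = ((c * ‖P v‖ ^ 2 : ℝ) : ℂ) ∧ ‖w‖ ≤ S * ‖P v‖) :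
    (∀ v : H, ∃ w' : H, ‖w'‖ ≤ (1 + S * M) * ‖v‖ ∧ γ * ‖v‖ ^ 2 ≤ ‖B v w'‖) ∧
      (∀ v : H, v ≠ 0 → ∃ w' : H, w' ≠ 0 ∧
        γ / (1 + S * M) * (‖v‖ * ‖w'‖) ≤ ‖B v w'‖) :=
  abstract_inf_sup_from_garding_general B hB_add₂ γ c S M hγ hS F hF P hP hGarding hAdjoint
end

section
/- Abstract quasi-optimality of Galerkin approximations under a Gårding-type inequality and a duality (Aubin–Nitsche) hypothesis, the skeleton of the quasi-optimality estimate (5.3) in Theorem 5.2: Let H be a complex Hilbert space, B : H × H → ℂ a sesquilinear form with |B(u,v)| ≤ C_c‖u‖‖v‖ for all u, v ∈ H, and V ⊆ H a subspace. Let γ > 0, κ ≥ 0, τ ≥ 0 satisfy κ·C_c²·τ² ≤ γ/2, and let P : H → H be a linear map. Let u ∈ H and u_h ∈ V satisfy the Galerkin orthogonality B(u − u_h, v) = 0 for all v ∈ V, and set e := u − u_h. Assume: (i) γ‖e‖² ≤ |B(e,e)| + κ‖P(e)‖²; (ii) there exist w ∈ H and w_h ∈ V with B(e, w) = ‖P(e)‖²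 and ‖w − w_h‖ ≤ τ‖P(e)‖. Then ‖e‖ ≤ (2 C_c/γ) ‖u − v‖ for every v ∈ V. -/
/-!
The error `e = u - u_h` is `B`-orthogonal to `V`. Testing this against the dual solution shows
`‖P e‖² = |B(e, w - w_h)| ≤ C_c τ ‖e‖ ‖P e‖`, so `‖P e‖ ≤ C_c τ ‖e‖`, and the resonance condition
`κ C_c² τ² ≤ γ / 2` lets the Gårding inequality absorb the compact term:
`γ/2 ‖e‖² ≤ |B(e, e)| = |B(e, u - v)| ≤ C_c ‖e‖ ‖u - v‖`.
-/

theorem le_of_sq_le_mul {α : Type*} [Semiring α] [LinearOrder α] [IsStrictOrderedRing α]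
    {x c : α} (hc : 0 ≤ c) (h : x ^ 2 ≤ c * x) : x ≤ c := by
  rcases le_or_gt x 0 with hx | hx
  · exact hx.trans hc
  · exact le_of_mul_le_mul_right (by rwa [← sq]) hx

theorem half_mul_sq_le_of_garding {x b p κ γ M : ℝ} (hκ : 0 ≤ κ) (hp : 0 ≤ p) (hpM : p ≤ M * x)
    (hres : κ * M ^ 2 ≤ γ / 2) (hGarding : γ * x ^ 2 ≤ b + κ * p ^ 2) :
    γ / 2 * x ^ 2 ≤ b := by
  have hκp : κ * p ^ 2 ≤ γ / 2 * x ^ 2 :=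
    calc κ * p ^ 2 ≤ κ * (M * x) ^ 2 := by gcongr
      _ = κ * M ^ 2 * x ^ 2 := by ring
      _ ≤ γ / 2 * x ^ 2 := by gcongr
  linarith

theorem apply_sub_of_apply_eq_zero {H G : Type*} [AddGroup H] [AddGroup G] {B : H → H → G}
    (hB_add : ∀ u v w : H, B u (v + w) = B u v + B u w) {e x y : H} (hy : B e y = 0) :
    B e (x - y) = B e x := by
  simpa [hy] using map_sub (AddMonoidHom.mk' (B e) (hB_add e)) x y

section Galerkin

variable {H : Type*} [SeminormedAddCommGroup H] {B : H → H → ℂ} {C : ℝ} (hC : 0 ≤ C)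
  (hB_add : ∀ u v w : H, B u (v + w) = B u v + B u w) (hB_bound : ∀ u v : H, ‖B u v‖ ≤ C * ‖u‖ * ‖v‖)
  {V : Set H} {e : H} (hGalerkin : ∀ v ∈ V, B e v = 0)
include hB_add hB_bound hGalerkin

theorem norm_apply_le_of_sub_mem {x y : H} (hxy : x - y ∈ V) : ‖B e x‖ ≤ C * ‖e‖ * ‖y‖ := by
  rw [← apply_sub_of_apply_eq_zero hB_add (hGalerkin _ hxy), sub_sub_cancel]
  exact hB_bound _ _

include hC in
theorem le_of_galerkin_dual {τ r : ℝ} (hτ : 0 ≤ τ) {w w_h : H} (hw_h : w_h ∈ V)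
    (hBw : B e w = ((r ^ 2 : ℝ) : ℂ)) (hw : ‖w - w_h‖ ≤ τ * r) : r ≤ C * τ * ‖e‖ := by
  refine le_of_sq_le_mul (by positivity) ?_
  calc r ^ 2 = ‖B e (w - w_h)‖ := by
        rw [apply_sub_of_apply_eq_zero hB_add (hGalerkin _ hw_h), hBw, Complex.norm_real,
          Real.norm_of_nonneg (sq_nonneg r)]
    _ ≤ C * ‖e‖ * ‖w - w_h‖ := hB_bound _ _
    _ ≤ C * ‖e‖ * (τ * r) := by gcongr
    _ = C * τ * ‖e‖ * r := by ring

end Galerkin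

theorem abstract_galerkin_quasi_optimality_general
    {H : Type*} [NormedAddCommGroup H] [InnerProductSpace ℂ H]
    (B : H → H → ℂ) (C_c : ℝ) (hC_c : 0 < C_c)
    (hB_add₂ : ∀ u v w : H, B u (v + w) = B u v + B u w)
    (hB_bound : ∀ u v : H, ‖B u v‖ ≤ C_c * ‖u‖ * ‖v‖)
    (V : Submodule ℂ H)
    (γ κ τ : ℝ) (hγ : 0 < γ) (hκ : 0 ≤ κ) (hτ : 0 ≤ τ)
    (hres : κ * C_c ^ 2 * τ ^ 2 ≤ γ / 2)
    (P : H →ₗ[ℂ] H)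
    (u u_h : H) (hu_h : u_h ∈ V)
    (hGalerkin : ∀ v ∈ V, B (u - u_h) v = 0)
    (hGarding : γ * ‖u - u_h‖ ^ 2 ≤
      ‖B (u - u_h) (u - u_h)‖ + κ * ‖P (u - u_h)‖ ^ 2)
    (hdual : ∃ w : H, ∃ w_h ∈ V,
      B (u - u_h) w = ((‖P (u - u_h)‖ ^ 2 : ℝ) : ℂ) ∧ ‖w - w_h‖ ≤ τ * ‖P (u - u_h)‖) :
    ∀ v ∈ V, ‖u - u_h‖ ≤ (2 * C_c / γ) * ‖u - v‖ := by
  intro v hv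
  obtain ⟨w, w_h, hw_h, hBw, hw⟩ := hdual
  have hPe : ‖P (u - u_h)‖ ≤ C_c * τ * ‖u - u_h‖ :=
    le_of_galerkin_dual hC_c.le hB_add₂ hB_bound hGalerkin hτ hw_h hBw hw
  have hcoercive : γ / 2 * ‖u - u_h‖ ^ 2 ≤ ‖B (u - u_h) (u - u_h)‖ :=
    half_mul_sq_le_of_garding hκ (norm_nonneg _) hPe (by rwa [mul_pow, ← mul_assoc]) hGarding
  have hcea : ‖B (u - u_h) (u - u_h)‖ ≤ C_c * ‖u - u_h‖ * ‖u - v‖ :=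
    norm_apply_le_of_sub_mem hB_add₂ hB_bound hGalerkin
      (by rw [sub_sub_sub_cancel_left]; exact V.sub_mem hv hu_h)
  refine le_of_sq_le_mul (by positivity) ?_
  rw [div_mul_eq_mul_div, div_mul_eq_mul_div, le_div_iff₀ hγ]
  linarith

/-- **Abstract quasi-optimality of Galerkin approximations** under a Gårding-type inequality
and a duality (Aubin–Nitsche) hypothesis: the skeleton of the quasi-optimality estimate (5.3)
of Theorem 5.2. -/
theorem abstract_galerkin_quasi_optimality
    {H : Type*} [NormedAddCommGroup H] [InnerProductSpace ℂ H] [CompleteSpace H]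
    (B : H → H → ℂ) (C_c : ℝ) (hC_c : 0 < C_c)
    (hB_add₁ : ∀ u v w : H, B (u + v) w = B u w + B v w)
    (hB_smul₁ : ∀ (c : ℂ) (u w : H), B (c • u) w = c * B u w)
    (hB_add₂ : ∀ u v w : H, B u (v + w) = B u v + B u w)
    (hB_smul₂ : ∀ (c : ℂ) (u w : H), B u (c • w) = (starRingEnd ℂ c) * B u w)
    (hB_bound : ∀ u v : H, ‖B u v‖ ≤ C_c * ‖u‖ * ‖v‖)
    (V : Submodule ℂ H)
    (γ κ τ : ℝ) (hγ : 0 < γ) (hκ : 0 ≤ κ) (hτ : 0 ≤ τ)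
    (hres : κ * C_c ^ 2 * τ ^ 2 ≤ γ / 2)
    (P : H →ₗ[ℂ] H)
    (u u_h : H) (hu_h : u_h ∈ V)
    (hGalerkin : ∀ v ∈ V, B (u - u_h) v = 0)
    (hGarding : γ * ‖u - u_h‖ ^ 2 ≤
      ‖B (u - u_h) (u - u_h)‖ + κ * ‖P (u - u_h)‖ ^ 2)
    (hdual : ∃ w : H, ∃ w_h ∈ V,
      B (u - u_h) w = ((‖P (u - u_h)‖ ^ 2 : ℝ) : ℂ) ∧ ‖w - w_h‖ ≤ τ * ‖P (u - u_h)‖) :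
    ∀ v ∈ V, ‖u - u_h‖ ≤ (2 * C_c / γ) * ‖u - v‖ :=
  abstract_galerkin_quasi_optimality_general B C_c hC_c hB_add₂ hB_bound V γ κ τ hγ hκ hτ hres P u
    u_h hu_h hGalerkin hGarding hdual
end

section
/- Pointwise boundary estimate via a weighted Young inequality, used in the third step of the proof of the Rellich–Morawetz lemma (estimate (6.2)): Let n ∈ ℝ³ with |n| = 1, let x ∈ ℝ³ with x·n > 0, and let ξ ∈ ℂ³. Define ξ_N := (ξ·n)·n, ξ_T := ξ − ξ_N, and x_T := x − (x·n)·n. Then (|ξ_T|² − |ξ_N|²)(x·n) − 2 Re( (ξ_T·x_T)·conj(ξ·n) ) ≤ |ξ_T|² |x|² / (x·n). -/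
noncomputable section

open Finset

/-- The pairing `a·v := Σᵢ aᵢvᵢ ∈ ℂ` of a complex vector `a ∈ ℂ³` with a real vector
`v ∈ ℝ³` (regarded as an element of `ℂ³`). -/
def cdotR (a : Fin 3 → ℂ) (v : Fin 3 → ℝ) : ℂ := ∑ i, a i * (v i : ℂ)

/-- Squared Hermitian norm `|a|² := Σᵢ |aᵢ|²` on `ℂ³`. -/
def hnormSq (a : Fin 3 → ℂ) : ℝ := ∑ i, ‖a i‖ ^ 2

/-! Write `d = x·n` and `c = ξ·n`. Since `n` is a unit vector, `|ξ_N| = |c|` and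
`|x|² = |x_T|² + d²`, and Cauchy–Schwarz gives `|ξ_T·x_T|² ≤ |ξ_T|² |x_T|²`. The mixed term is
then absorbed by the weighted Young inequality `2ab ≤ a²/d + d b²` with `a = |ξ_T·x_T|`,
`b = |c|`: the `d b²` part cancels `-|ξ_N|² d` and the `a²/d` part is at most `|ξ_T|² |x_T|²/d`. -/

theorem two_mul_le_sq_div_add_mul_sq {a b d : ℝ} (hd : 0 < d) :
    2 * a * b ≤ a ^ 2 / d + d * b ^ 2 := by
  rw [div_add' _ _ _ hd.ne', le_div_iff₀ hd]
  nlinarith [sq_nonneg (a - d * b)]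

theorem hnormSq_mul_real (c : ℂ) (n : Fin 3 → ℝ) :
    hnormSq (fun i => c * (n i : ℂ)) = ‖c‖ ^ 2 * ∑ i, n i ^ 2 := by
  simp only [hnormSq, norm_mul, Complex.norm_real, Real.norm_eq_abs, mul_pow, sq_abs, mul_sum]

theorem norm_cdotR_sq_le (a : Fin 3 → ℂ) (v : Fin 3 → ℝ) :
    ‖cdotR a v‖ ^ 2 ≤ hnormSq a * ∑ i, v i ^ 2 := by
  have h_triangle : ‖cdotR a v‖ ≤ ∑ i, ‖a i‖ * |v i| := by
    simpa only [cdotR, norm_mul, Complex.norm_real, Real.norm_eq_abs] using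
      norm_sum_le univ fun i => a i * (v i : ℂ)
  calc ‖cdotR a v‖ ^ 2 ≤ (∑ i, ‖a i‖ * |v i|) ^ 2 := by gcongr
    _ ≤ (∑ i, ‖a i‖ ^ 2) * ∑ i, |v i| ^ 2 := sum_mul_sq_le_sq_mul_sq _ _ _
    _ = hnormSq a * ∑ i, v i ^ 2 := by simp only [hnormSq, sq_abs]

theorem sum_sq_eq_sum_sq_sub_proj_add {ι : Type*} [Fintype ι] (x n : ι → ℝ)
    (hn : ∑ i, n i ^ 2 = 1) :
    ∑ i, x i ^ 2 = ∑ i, (x i - (∑ j, x j * n j) * n i) ^ 2 + (∑ j, x j * n j) ^ 2 := by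
  set d := ∑ j, x j * n j
  have h_expand : ∀ i, (x i - d * n i) ^ 2 = x i ^ 2 - 2 * d * (x i * n i) + d ^ 2 * n i ^ 2 :=
    fun i => by ring
  simp only [h_expand, sum_add_distrib, sum_sub_distrib, ← mul_sum, hn]
  ring

theorem neg_norm_mul_norm_le_re_mul_conj (z c : ℂ) :
    -(‖z‖ * ‖c‖) ≤ (z * starRingEnd ℂ c).re := by
  have h := neg_abs_le (z * starRingEnd ℂ c).re
  have h_abs := Complex.abs_re_le_norm (z * starRingEnd ℂ c)
  rw [norm_mul, Complex.norm_conj] at h_abs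
  linarith

theorem weighted_young_boundary_bound {A s d : ℝ} {z c : ℂ} (hd : 0 < d)
    (hz : ‖z‖ ^ 2 ≤ A * s) :
    (A - ‖c‖ ^ 2) * d - 2 * (z * starRingEnd ℂ c).re ≤ A * (s + d ^ 2) / d := by
  have h_young := two_mul_le_sq_div_add_mul_sq (a := ‖z‖) (b := ‖c‖) hd
  have h_re := neg_norm_mul_norm_le_re_mul_conj z c
  have h_absorb : ‖z‖ ^ 2 / d ≤ A * s / d := div_le_div_of_nonneg_right hz hd.le
  calc (A - ‖c‖ ^ 2) * d - 2 * (z * starRingEnd ℂ c).re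
      ≤ A * d + ‖z‖ ^ 2 / d := by linarith
    _ ≤ A * d + A * s / d := by linarith
    _ = A * (s + d ^ 2) / d := by field_simp; ring

theorem boundary_estimate_weighted_young_general
    (n x : Fin 3 → ℝ) (hn : ∑ i, n i ^ 2 = 1) (hx : 0 < ∑ i, x i * n i)
    (ξ : Fin 3 → ℂ)
    (ξN : Fin 3 → ℂ) (hξN : ξN = fun i => cdotR ξ n * (n i : ℂ))
    (ξT : Fin 3 → ℂ)
    (xT : Fin 3 → ℝ) (hxT : xT = fun i => x i - (∑ j, x j * n j) * n i) :
    (hnormSq ξT - hnormSq ξN) * (∑ i, x i * n i)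
        - 2 * (cdotR ξT xT * starRingEnd ℂ (cdotR ξ n)).re
      ≤ hnormSq ξT * (∑ i, x i ^ 2) / (∑ i, x i * n i) := by
  have h_normal : hnormSq ξN = ‖cdotR ξ n‖ ^ 2 := by
    rw [hξN, hnormSq_mul_real, hn, mul_one]
  have h_pythagoras : ∑ i, x i ^ 2 = ∑ i, xT i ^ 2 + (∑ i, x i * n i) ^ 2 := by
    rw [hxT]; exact sum_sq_eq_sum_sq_sub_proj_add x n hn
  rw [h_normal, h_pythagoras]
  exact weighted_young_boundary_bound hx (norm_cdotR_sq_le ξT xT)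

/-- **Pointwise boundary estimate via a weighted Young inequality**, used in the third step of
the proof of the Rellich–Morawetz lemma (estimate (6.2)): for a unit vector `n ∈ ℝ³`, a
vector `x ∈ ℝ³` with `x·n > 0`, and `ξ ∈ ℂ³`, with `ξ_N := (ξ·n)n`, `ξ_T := ξ − ξ_N`,
`x_T := x − (x·n)n`, one has
`(|ξ_T|² − |ξ_N|²)(x·n) − 2 Re( (ξ_T·x_T) conj(ξ·n) ) ≤ |ξ_T|² |x|² / (x·n)`. -/
theorem boundary_estimate_weighted_young
    (n x : Fin 3 → ℝ) (hn : ∑ i, n i ^ 2 = 1) (hx : 0 < ∑ i, x i * n i)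
    (ξ : Fin 3 → ℂ)
    (ξN : Fin 3 → ℂ) (hξN : ξN = fun i => cdotR ξ n * (n i : ℂ))
    (ξT : Fin 3 → ℂ) (hξT : ξT = fun i => ξ i - ξN i)
    (xT : Fin 3 → ℝ) (hxT : xT = fun i => x i - (∑ j, x j * n j) * n i) :
    (hnormSq ξT - hnormSq ξN) * (∑ i, x i * n i)
        - 2 * (cdotR ξT xT * starRingEnd ℂ (cdotR ξ n)).re
      ≤ hnormSq ξT * (∑ i, x i ^ 2) / (∑ i, x i * n i) :=
  boundary_estimate_weighted_young_general n x hn hx ξ ξN hξN ξT xT hxT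
end
end

section
/- Abstract discrete inf-sup lemma behind the first part of Theorem 5.2 (discrete inf-sup stability from a Gårding-type inequality, an interpolated sign-flip map, and approximable adjoint solutions): Let H be a complex Hilbert space, V ⊆ H a subspace, and B : H × H → ℂ a sesquilinear form with |B(u,v)| ≤ C_c‖u‖‖v‖ for all u, v ∈ H. Let γ > 0, c ≥ 0, S ≥ 0, M ≥ 0, ε ≥ 0, τ ≥ 0 satisfy C_c·(ε + τ·M) ≤ γ/2. Let F : V → H satisfy ‖F(v)‖ ≤ ‖v‖ for all v ∈ V, let I : H → V be a map with ‖I(F(v)) − F(v)‖ ≤ ε‖v‖ for all v ∈ V, and let P : H → H be a linear map with ‖P(v)‖ ≤ M‖v‖ for all v ∈ H. Assume: (i) (Gårding-type inequality) |B(v, F(v)) + c‖P(v)‖²| ≥ γ‖v‖² for all v ∈ V; (ii) (approximable adjoint solvability) for every v ∈ V there exist w ∈ H and w_h ∈ V with B(v, w) = c‖P(v)‖², ‖w‖ ≤ S‖P(v)‖, and ‖w − w_h‖ ≤ τ‖P(v)‖. Then for every v ∈ V there exists w' ∈ V with ‖w'‖ ≤ (1 + ε + (S + τ)·M)‖v‖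 and |B(v, w')| ≥ (γ/2)‖v‖². -/
/-! Test `B(v, ·)` against `w' = I(F v) + w_h`. Up to the error `(I(F v) - F v) + (w_h - w)`, of
norm at most `(ε + τ M)‖v‖`, the vector `w'` is `F v + w`, and `B(v, F v + w)` is exactly the
left-hand side of the Gårding inequality because `B(v, w) = c‖P v‖²`. Continuity of `B` makes the
error cost at most `C_c (ε + τ M)‖v‖² ≤ (γ/2)‖v‖²`. -/

section BoundedForm

variable {H E : Type*} [SeminormedAddCommGroup H] [SeminormedAddCommGroup E]
  {B : H → H → E} {C : ℝ}

theorem mul_norm_nonneg_of_bound (hB : ∀ u v, ‖B u v‖ ≤ C * ‖u‖ * ‖v‖) (u : H) :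
    0 ≤ C * ‖u‖ := by
  rcases (norm_nonneg u).eq_or_lt with hu | hu
  · rw [← hu, mul_zero]
  · exact nonneg_of_mul_nonneg_left ((norm_nonneg _).trans (hB u u)) hu

theorem norm_apply_le_of_bound (hB : ∀ u v, ‖B u v‖ ≤ C * ‖u‖ * ‖v‖) (u : H) {x : H} {δ : ℝ}
    (hx : ‖x‖ ≤ δ) : ‖B u x‖ ≤ C * ‖u‖ * δ :=
  (hB u x).trans (mul_le_mul_of_nonneg_left hx (mul_norm_nonneg_of_bound hB u))

theorem le_norm_apply_of_norm_sub_le (hB_add : ∀ u v w, B u (v + w) = B u v + B u w)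
    (hB : ∀ u v, ‖B u v‖ ≤ C * ‖u‖ * ‖v‖) {γ η : ℝ} (hη : C * η ≤ γ / 2) {v x y : H}
    (hx : γ * ‖v‖ ^ 2 ≤ ‖B v x‖) (hxy : ‖y - x‖ ≤ η * ‖v‖) :
    γ / 2 * ‖v‖ ^ 2 ≤ ‖B v y‖ := by
  have hsub : B v (y - x) = B v y - B v x := map_sub (AddMonoidHom.mk' (B v) (hB_add v)) y x
  have herr : ‖B v (y - x)‖ ≤ γ / 2 * ‖v‖ ^ 2 :=
    calc ‖B v (y - x)‖ ≤ C * ‖v‖ * (η * ‖v‖) := norm_apply_le_of_bound hB v hxy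
      _ = C * η * ‖v‖ ^ 2 := by ring
      _ ≤ γ / 2 * ‖v‖ ^ 2 := mul_le_mul_of_nonneg_right hη (sq_nonneg _)
  have htri : ‖B v x‖ ≤ ‖B v y‖ + ‖B v (y - x)‖ := by
    rw [hsub]
    exact norm_le_norm_add_norm_sub _ _
  linarith

end BoundedForm

theorem abstract_discrete_inf_sup_from_garding_general
    {H : Type*} [NormedAddCommGroup H] [InnerProductSpace ℂ H]
    (V : Submodule ℂ H)
    (B : H → H → ℂ) (C_c : ℝ)
    (hB_add₂ : ∀ u v w : H, B u (v + w) = B u v + B u w)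
    (hB_bound : ∀ u v : H, ‖B u v‖ ≤ C_c * ‖u‖ * ‖v‖)
    (γ c S M ε τ : ℝ) (hS : 0 ≤ S)
    (hτ : 0 ≤ τ)
    (hres : C_c * (ε + τ * M) ≤ γ / 2)
    (F : H → H) (hF : ∀ v ∈ V, ‖F v‖ ≤ ‖v‖)
    (I : H → H) (hI_mem : ∀ u : H, I u ∈ V)
    (hI : ∀ v ∈ V, ‖I (F v) - F v‖ ≤ ε * ‖v‖)
    (P : H →ₗ[ℂ] H) (hP : ∀ v : H, ‖P v‖ ≤ M * ‖v‖)
    (hGarding : ∀ v ∈ V, γ * ‖v‖ ^ 2 ≤ ‖B v (F v) + ((c * ‖P v‖ ^ 2 : ℝ) : ℂ)‖)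
    (hAdjoint : ∀ v ∈ V, ∃ w : H, ∃ w_h ∈ V,
      B v w = ((c * ‖P v‖ ^ 2 : ℝ) : ℂ) ∧ ‖w‖ ≤ S * ‖P v‖ ∧ ‖w - w_h‖ ≤ τ * ‖P v‖) :
    ∀ v ∈ V, ∃ w' ∈ V, ‖w'‖ ≤ (1 + ε + (S + τ) * M) * ‖v‖ ∧
      γ / 2 * ‖v‖ ^ 2 ≤ ‖B v w'‖ := by
  intro v hv
  obtain ⟨w, w_h, hw_h_mem, hBw, hwS, hwτ⟩ := hAdjoint v hv
  have hw : ‖w‖ ≤ S * (M * ‖v‖) := hwS.trans (mul_le_mul_of_nonneg_left (hP v) hS)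
  have hw_h_close : ‖w_h - w‖ ≤ τ * (M * ‖v‖) := by
    rw [norm_sub_rev]
    exact hwτ.trans (mul_le_mul_of_nonneg_left (hP v) hτ)
  have hsplit : I (F v) + w_h = (I (F v) - F v) + (w_h - w) + (F v + w) := by abel
  refine ⟨I (F v) + w_h, V.add_mem (hI_mem _) hw_h_mem, ?_, ?_⟩
  · rw [hsplit]
    have h₃ := norm_add₃_le (a := I (F v) - F v) (b := w_h - w) (c := F v + w)
    have h₂ := norm_add_le (F v) w
    linarith [hI v hv, hF v hv]
  · refine le_norm_apply_of_norm_sub_le hB_add₂ hB_bound hres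
      (x := F v + w) (by rw [hB_add₂, hBw]; exact hGarding v hv) ?_
    rw [hsplit, add_sub_cancel_right]
    have h₂ := norm_add_le (I (F v) - F v) (w_h - w)
    linarith [hI v hv]

/-- **Abstract discrete inf-sup lemma** behind the first part of Theorem 5.2: discrete inf-sup
stability from a Gårding-type inequality, an interpolated sign-flip map, and approximable
adjoint solutions. -/
theorem abstract_discrete_inf_sup_from_garding
    {H : Type*} [NormedAddCommGroup H] [InnerProductSpace ℂ H] [CompleteSpace H]
    (V : Submodule ℂ H)
    (B : H → H → ℂ) (C_c : ℝ) (hC_c : 0 < C_c)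
    (hB_add₁ : ∀ u v w : H, B (u + v) w = B u w + B v w)
    (hB_smul₁ : ∀ (c : ℂ) (u w : H), B (c • u) w = c * B u w)
    (hB_add₂ : ∀ u v w : H, B u (v + w) = B u v + B u w)
    (hB_smul₂ : ∀ (c : ℂ) (u w : H), B u (c • w) = (starRingEnd ℂ c) * B u w)
    (hB_bound : ∀ u v : H, ‖B u v‖ ≤ C_c * ‖u‖ * ‖v‖)
    (γ c S M ε τ : ℝ) (hγ : 0 < γ) (hc : 0 ≤ c) (hS : 0 ≤ S) (hM : 0 ≤ M)
    (hε : 0 ≤ ε) (hτ : 0 ≤ τ)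
    (hres : C_c * (ε + τ * M) ≤ γ / 2)
    (F : H → H) (hF : ∀ v ∈ V, ‖F v‖ ≤ ‖v‖)
    (I : H → H) (hI_mem : ∀ u : H, I u ∈ V)
    (hI : ∀ v ∈ V, ‖I (F v) - F v‖ ≤ ε * ‖v‖)
    (P : H →ₗ[ℂ] H) (hP : ∀ v : H, ‖P v‖ ≤ M * ‖v‖)
    (hGarding : ∀ v ∈ V, γ * ‖v‖ ^ 2 ≤ ‖B v (F v) + ((c * ‖P v‖ ^ 2 : ℝ) : ℂ)‖)
    (hAdjoint : ∀ v ∈ V, ∃ w : H, ∃ w_h ∈ V,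
      B v w = ((c * ‖P v‖ ^ 2 : ℝ) : ℂ) ∧ ‖w‖ ≤ S * ‖P v‖ ∧ ‖w - w_h‖ ≤ τ * ‖P v‖) :
    ∀ v ∈ V, ∃ w' ∈ V, ‖w'‖ ≤ (1 + ε + (S + τ) * M) * ‖v‖ ∧
      γ / 2 * ‖v‖ ^ 2 ≤ ‖B v w'‖ :=
  abstract_discrete_inf_sup_from_garding_general V B C_c hB_add₂ hB_bound γ c S M ε τ hS hτ hres F
    hF I hI_mem hI P hP hGarding hAdjoint
end
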